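/- arXiv:2209.06200 — 4 statements merged into one kernel-verified Lean document; each statement's English description precedes it below -/
import Mathlib

section
/- For L = α⁻¹ Id_H with α ∈ ℝ \ {0} and B : H → 2^H, the resolvent composition satisfies L ▷ B = (α² − 1) Id_H + α (B ∘ (α Id_H)). -/
open scoped RealInnerProductSpace

noncomputable section

/-- Inverse of a set-valued operator. -/
def svInv {α β : Type*} (A : α → Set β) : β → Set α := fun y => {x | y ∈ A x}

/-- `A + Id`. -/
def plusId {E : Type*} [AddGroup E] (A : E → Set E) : E → Set E :=
  fun x => (fun u => u + x) '' A x

/-- `A - Id`. -/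
def minusId {E : Type*} [AddGroup E] (A : E → Set E) : E → Set E :=
  fun x => (fun u => u - x) '' A x

/-- Resolvent `J_A = (A + Id)⁻¹`. -/
def svResolvent {E : Type*} [AddGroup E] (A : E → Set E) : E → Set E :=
  svInv (plusId A)

/-- `L* ∘ A ∘ L` as a set-valued operator. -/
def svComp {H G : Type*} [NormedAddCommGroup H] [InnerProductSpace ℝ H] [CompleteSpace H]
    [NormedAddCommGroup G] [InnerProductSpace ℝ G] [CompleteSpace G]
    (L : H →L[ℝ] G) (A : G → Set G) : H → Set H :=
  fun x => (ContinuousLinearMap.adjoint L) '' A (L x)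

/-- Parallel composition `L* ▹ A = (L* ∘ A⁻¹ ∘ L)⁻¹`. -/
def parComp {H G : Type*} [NormedAddCommGroup H] [InnerProductSpace ℝ H] [CompleteSpace H]
    [NormedAddCommGroup G] [InnerProductSpace ℝ G] [CompleteSpace G]
    (L : H →L[ℝ] G) (A : G → Set G) : H → Set H :=
  svInv (svComp L (svInv A))

/-- Resolvent composition `L ▷ B = L* ▹ (B + Id) - Id`. -/
def rcomp {H G : Type*} [NormedAddCommGroup H] [InnerProductSpace ℝ H] [CompleteSpace H]
    [NormedAddCommGroup G] [InnerProductSpace ℝ G] [CompleteSpace G]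
    (L : H →L[ℝ] G) (B : G → Set G) : H → Set H :=
  minusId (parComp L (plusId B))

/-- Resolvent cocomposition `L ▶ B = (L ▷ B⁻¹)⁻¹`. -/
def ccomp {H G : Type*} [NormedAddCommGroup H] [InnerProductSpace ℝ H] [CompleteSpace H]
    [NormedAddCommGroup G] [InnerProductSpace ℝ G] [CompleteSpace G]
    (L : H →L[ℝ] G) (B : G → Set G) : H → Set H :=
  svInv (rcomp L (svInv B))

/-- Monotonicity of a set-valued operator. -/
def SVMonotone {E : Type*} [NormedAddCommGroup E] [InnerProductSpace ℝ E]
    (A : E → Set E) : Prop :=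
  ∀ x₁ u₁ x₂ u₂, u₁ ∈ A x₁ → u₂ ∈ A x₂ → 0 ≤ ⟪x₁ - x₂, u₁ - u₂⟫

/-- Maximal monotonicity of a set-valued operator. -/
def SVMaxMonotone {E : Type*} [NormedAddCommGroup E] [InnerProductSpace ℝ E]
    (A : E → Set E) : Prop :=
  SVMonotone A ∧ ∀ x u, (∀ y v, v ∈ A y → 0 ≤ ⟪x - y, u - v⟫) → u ∈ A x

variable {H G : Type*}
  [NormedAddCommGroup H] [InnerProductSpace ℝ H] [CompleteSpace H]
  [NormedAddCommGroup G] [InnerProductSpace ℝ G] [CompleteSpace G]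

/-!
A nonzero multiple `c • Id` of the identity is self-adjoint, so `L* ∘ A⁻¹ ∘ L` is the rescaling
`x ↦ c • A⁻¹ (c • x)`, whose inverse is `x ↦ c⁻¹ • A (c⁻¹ • x)`. With `c = α⁻¹` and `A = B + Id`,
subtracting `Id` leaves `(α² - 1) Id + α (B ∘ (α Id))`.
-/

open scoped Pointwise

theorem svInv_svInv {α β : Type*} (A : α → Set β) : svInv (svInv A) = A := rfl

theorem svInv_smul_comp_smul {𝕜 E : Type*} [Field 𝕜] [AddCommGroup E] [Module 𝕜 E] {c : 𝕜}
    (hc : c ≠ 0) (A : E → Set E) :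
    svInv (fun x => c • A (c • x)) = fun y => c⁻¹ • svInv A (c⁻¹ • y) := by
  funext y
  ext x
  simp only [svInv, Set.mem_ofPred_eq, Set.mem_smul_set_iff_inv_smul_mem₀ hc,
    Set.mem_smul_set_iff_inv_smul_mem₀ (inv_ne_zero hc), inv_inv]

theorem adjoint_smul_id (c : ℝ) :
    ContinuousLinearMap.adjoint (c • ContinuousLinearMap.id ℝ H) =
      c • ContinuousLinearMap.id ℝ H := by
  rw [map_smulₛₗ, ContinuousLinearMap.adjoint_id, starRingEnd_apply, star_trivial]

theorem svComp_smul_id (c : ℝ) (A : H → Set H) :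
    svComp (c • ContinuousLinearMap.id ℝ H) A = fun x => c • A (c • x) := by
  funext x
  simp only [svComp, adjoint_smul_id, smul_apply, ContinuousLinearMap.id_apply]
  exact Set.image_smul

theorem parComp_smul_id {c : ℝ} (hc : c ≠ 0) (A : H → Set H) :
    parComp (c • ContinuousLinearMap.id ℝ H) A = fun x => c⁻¹ • A (c⁻¹ • x) := by
  rw [parComp, svComp_smul_id, svInv_smul_comp_smul hc, svInv_svInv]

/-- For `L = α⁻¹ Id`, one has `L ▷ B = (α² − 1) Id + α (B ∘ (α Id))`. -/
theorem rcomp_inv_smul_id (α : ℝ) (hα : α ≠ 0) (B : H → Set H) :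
    rcomp ((α⁻¹ : ℝ) • (ContinuousLinearMap.id ℝ H)) B =
      fun x => (fun v => (α ^ 2 - 1) • x + α • v) '' B (α • x) := by
  rw [rcomp, parComp_smul_id (inv_ne_zero hα), inv_inv]
  funext x
  simp only [minusId, plusId, ← Set.image_smul, Set.image_image]
  congr 1
  funext v
  module
end
end

section
/- If 0 < ‖L‖, α ≥ 0, B − α Id_G is monotone, ‖L‖ < √(α+1), and B is monotone, then L ▷ B is β-strongly monotone with β = (α+1)‖L‖⁻² − 1 > 0. -/
/-! A point `(x, u)` of the graph of `L ▷ B` comes from some `y` with `x = L* y` and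
`v := L (x + u) - y ∈ B y`. For two such points the pairing `⟪Δx, Δu⟫` equals
`⟪Δy, Δv⟫ + ‖Δy‖² - ‖Δx‖² ≥ (α + 1) ‖Δy‖² - ‖Δx‖²`, and `‖Δx‖ ≤ ‖L‖ ‖Δy‖` turns this into
`((α + 1) / ‖L‖² - 1) ‖Δx‖²`. -/

open scoped RealInnerProductSpace

noncomputable section

variable {H G : Type*}
  [NormedAddCommGroup H] [InnerProductSpace ℝ H] [CompleteSpace H]
  [NormedAddCommGroup G] [InnerProductSpace ℝ G] [CompleteSpace G]

def SVStronglyMonotone {E : Type*} [NormedAddCommGroup E] [InnerProductSpace ℝ E]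
    (β : ℝ) (A : E → Set E) : Prop :=
  ∀ x₁ u₁ x₂ u₂, u₁ ∈ A x₁ → u₂ ∈ A x₂ → β * ‖x₁ - x₂‖ ^ 2 ≤ ⟪x₁ - x₂, u₁ - u₂⟫

theorem mem_plusId_iff {E : Type*} [AddGroup E] {A : E → Set E} {x u : E} :
    u ∈ plusId A x ↔ u - x ∈ A x := by
  simp [plusId, sub_eq_add_neg]

theorem mem_minusId_iff {E : Type*} [AddGroup E] {A : E → Set E} {x u : E} :
    u ∈ minusId A x ↔ u + x ∈ A x := by
  simp [minusId, sub_eq_iff_eq_add]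

theorem mem_parComp_iff {L : H →L[ℝ] G} {A : G → Set G} {x w : H} :
    w ∈ parComp L A x ↔ ∃ y, L w ∈ A y ∧ L.adjoint y = x := by
  simp [parComp, svInv, svComp]

theorem mem_rcomp_iff {L : H →L[ℝ] G} {B : G → Set G} {x u : H} :
    u ∈ rcomp L B x ↔ ∃ y, L (u + x) - y ∈ B y ∧ L.adjoint y = x := by
  simp only [rcomp, mem_minusId_iff, mem_parComp_iff, mem_plusId_iff]

/-- By `mem_rcomp_iff`, `(yᵢ, L (uᵢ + L* yᵢ) - yᵢ)` are the points of the graph of `B` behind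
the points `(L* yᵢ, uᵢ)` of the graph of `L ▷ B`. -/
theorem inner_adjoint_sub_eq (L : H →L[ℝ] G) (y₁ y₂ : G) (u₁ u₂ : H) :
    ⟪L.adjoint y₁ - L.adjoint y₂, u₁ - u₂⟫ =
      ⟪y₁ - y₂, (L (u₁ + L.adjoint y₁) - y₁) - (L (u₂ + L.adjoint y₂) - y₂)⟫
        + ‖y₁ - y₂‖ ^ 2 - ‖L.adjoint y₁ - L.adjoint y₂‖ ^ 2 := by
  have hsplit : (L (u₁ + L.adjoint y₁) - y₁) - (L (u₂ + L.adjoint y₂) - y₂)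
      = L (u₁ - u₂) + L (L.adjoint (y₁ - y₂)) - (y₁ - y₂) := by
    simp only [map_add, map_sub]; abel
  rw [hsplit, ← map_sub, inner_sub_right (x := y₁ - y₂), inner_add_right (x := y₁ - y₂),
    ← ContinuousLinearMap.adjoint_inner_left, ← ContinuousLinearMap.adjoint_inner_left,
    real_inner_self_eq_norm_sq, real_inner_self_eq_norm_sq]
  ring

theorem norm_adjoint_sq_div_le (L : H →L[ℝ] G) (y : G) :
    ‖L.adjoint y‖ ^ 2 / ‖L‖ ^ 2 ≤ ‖y‖ ^ 2 := by
  refine div_le_of_le_mul₀ (by positivity) (by positivity) ?_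
  have : ‖L.adjoint y‖ ≤ ‖L‖ * ‖y‖ := by
    simpa using (ContinuousLinearMap.adjoint L).le_opNorm y
  calc ‖L.adjoint y‖ ^ 2 ≤ (‖L‖ * ‖y‖) ^ 2 := by gcongr
    _ = ‖y‖ ^ 2 * ‖L‖ ^ 2 := by ring

theorem SVStronglyMonotone.rcomp {α : ℝ} {B : G → Set G} (hB : SVStronglyMonotone α B)
    (hα : 0 ≤ α + 1) (L : H →L[ℝ] G) :
    SVStronglyMonotone ((α + 1) / ‖L‖ ^ 2 - 1) (rcomp L B) := by
  intro x₁ u₁ x₂ u₂ h₁ h₂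
  obtain ⟨y₁, hy₁, rfl⟩ := mem_rcomp_iff.1 h₁
  obtain ⟨y₂, hy₂, rfl⟩ := mem_rcomp_iff.1 h₂
  have hBy := hB _ _ _ _ hy₁ hy₂
  have hnorm := norm_adjoint_sq_div_le L (y₁ - y₂)
  rw [inner_adjoint_sub_eq, ← map_sub]
  calc ((α + 1) / ‖L‖ ^ 2 - 1) * ‖L.adjoint (y₁ - y₂)‖ ^ 2
      = (α + 1) * (‖L.adjoint (y₁ - y₂)‖ ^ 2 / ‖L‖ ^ 2) - ‖L.adjoint (y₁ - y₂)‖ ^ 2 := by ring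
    _ ≤ (α + 1) * ‖y₁ - y₂‖ ^ 2 - ‖L.adjoint (y₁ - y₂)‖ ^ 2 := by gcongr
    _ ≤ _ := by linarith

theorem rcomp_stronglyMonotone_general (L : H →L[ℝ] G) (hL0 : 0 < ‖L‖) (α : ℝ)
    (B : G → Set G)
    (hstr : ∀ y₁ v₁ y₂ v₂, v₁ ∈ B y₁ → v₂ ∈ B y₂ →
      α * ‖y₁ - y₂‖ ^ 2 ≤ ⟪y₁ - y₂, v₁ - v₂⟫)
    (hLb : ‖L‖ < Real.sqrt (α + 1)) :
    0 < (α + 1) / ‖L‖ ^ 2 - 1 ∧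
      ∀ x₁ u₁ x₂ u₂, u₁ ∈ rcomp L B x₁ → u₂ ∈ rcomp L B x₂ →
        ((α + 1) / ‖L‖ ^ 2 - 1) * ‖x₁ - x₂‖ ^ 2 ≤ ⟪x₁ - x₂, u₁ - u₂⟫ := by
  have hsq : ‖L‖ ^ 2 < α + 1 := (Real.lt_sqrt (norm_nonneg L)).1 hLb
  exact ⟨sub_pos.2 ((one_lt_div (by positivity)).2 hsq),
    SVStronglyMonotone.rcomp hstr ((sq_nonneg ‖L‖).trans hsq.le) L⟩

/-- If `B` is monotone, `B − α Id` is monotone, `0 < ‖L‖ < √(α+1)`, then `L ▷ B` is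
`β`-strongly monotone with `β = (α+1)‖L‖⁻² − 1 > 0`. -/
theorem rcomp_stronglyMonotone (L : H →L[ℝ] G) (hL0 : 0 < ‖L‖) (α : ℝ) (hα : 0 ≤ α)
    (B : G → Set G) (hmon : SVMonotone B)
    (hstr : ∀ y₁ v₁ y₂ v₂, v₁ ∈ B y₁ → v₂ ∈ B y₂ →
      α * ‖y₁ - y₂‖ ^ 2 ≤ ⟪y₁ - y₂, v₁ - v₂⟫)
    (hLb : ‖L‖ < Real.sqrt (α + 1)) :
    0 < (α + 1) / ‖L‖ ^ 2 - 1 ∧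
      ∀ x₁ u₁ x₂ u₂, u₁ ∈ rcomp L B x₁ → u₂ ∈ rcomp L B x₂ →
        ((α + 1) / ‖L‖ ^ 2 - 1) * ‖x₁ - x₂‖ ^ 2 ≤ ⟪x₁ - x₂, u₁ - u₂⟫ :=
  rcomp_stronglyMonotone_general L hL0 α B hstr hLb
end
end

section
/- If ‖L‖ ≤ 1 and B : D → G (D ⊆ G nonempty) is monotone and nonexpansive, then the resolvent cocomposition L ▶ B is monotone and nonexpansive. -/
/-!
Unwinding the definitions, `u ∈ (L ▶ B) x` means `u = L* (B q)` and `L (x + u) = q + B q` for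
some `q ∈ D`. For two such points let `x, u, q, b` be the differences of the `x`'s, `u`'s, `q`'s and
`B q`'s. Then `⟪x, u⟫ = ⟪q, b⟫ + ‖b‖² - ‖u‖²`, because `⟪L (x + u), b⟫ = ⟪x + u, u⟫`. Since
`‖L*‖ = ‖L‖ ≤ 1` we get `‖u‖ ≤ ‖b‖`, so monotonicity of `B` (`⟪q, b⟫ ≥ 0`) gives `⟪x, u⟫ ≥ 0`.
Expanding `‖q + b‖² ≤ ‖x + u‖²` with the same identity gives `‖q‖² + ‖u‖² ≤ ‖x‖² + ‖b‖²`, so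
nonexpansiveness of `B` (`‖b‖ ≤ ‖q‖`) gives `‖u‖ ≤ ‖x‖`.
-/

open scoped RealInnerProductSpace

noncomputable section

variable {H G : Type*}
  [NormedAddCommGroup H] [InnerProductSpace ℝ H] [CompleteSpace H]
  [NormedAddCommGroup G] [InnerProductSpace ℝ G] [CompleteSpace G]


open scoped InnerProduct

lemma ContinuousLinearMap.norm_apply_le_of_opNorm_le_one {𝕜 E F : Type*}
    [NontriviallyNormedField 𝕜] [SeminormedAddCommGroup E] [SeminormedAddCommGroup F]
    [NormedSpace 𝕜 E] [NormedSpace 𝕜 F] (f : E →L[𝕜] F) (hf : ‖f‖ ≤ 1) (x : E) :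
    ‖f x‖ ≤ ‖x‖ := by
  simpa using f.le_of_opNorm_le hf x

lemma mem_ccomp_iff (L : H →L[ℝ] G) (B : G → Set G) (x u : H) :
    u ∈ ccomp L B x ↔ ∃ q, ∃ v ∈ B q, u = (L†) v ∧ L (x + u) = q + v := by
  simp only [ccomp, rcomp, parComp, svComp, svInv, plusId, minusId, Set.mem_image]
  constructor
  · rintro ⟨w, ⟨p, ⟨q, hq, hqp⟩, rfl⟩, rfl⟩
    exact ⟨q, p, hq, rfl, by rw [sub_add_cancel, hqp]⟩
  · rintro ⟨q, v, hv, rfl, hxu⟩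
    exact ⟨x + (L†) v, ⟨v, ⟨q, hv, hxu.symm⟩, rfl⟩, add_sub_cancel_right _ _⟩

lemma exists_sub_of_mem_ccomp_graph {L : H →L[ℝ] G} {D : Set G} {B : G → G}
    {x₁ u₁ x₂ u₂ : H}
    (h₁ : u₁ ∈ ccomp L (fun y => {v | y ∈ D ∧ v = B y}) x₁)
    (h₂ : u₂ ∈ ccomp L (fun y => {v | y ∈ D ∧ v = B y}) x₂) :
    ∃ q₁ ∈ D, ∃ q₂ ∈ D, u₁ - u₂ = (L†) (B q₁ - B q₂) ∧
      L (x₁ - x₂ + (u₁ - u₂)) = q₁ - q₂ + (B q₁ - B q₂) := by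
  obtain ⟨q₁, _, ⟨hq₁, rfl⟩, rfl, hL₁⟩ := (mem_ccomp_iff L _ x₁ u₁).1 h₁
  obtain ⟨q₂, _, ⟨hq₂, rfl⟩, rfl, hL₂⟩ := (mem_ccomp_iff L _ x₂ u₂).1 h₂
  refine ⟨q₁, hq₁, q₂, hq₂, (map_sub _ _ _).symm, ?_⟩
  rw [sub_add_sub_comm, map_sub, hL₁, hL₂]
  abel

section

variable {L : H →L[ℝ] G} {x u : H} {q b : G}

lemma inner_eq_of_apply_add_adjoint (hu : u = (L†) b) (hq : L (x + u) = q + b) :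
    ⟪x, u⟫ = ⟪q, b⟫ + ‖b‖ ^ 2 - ‖u‖ ^ 2 := by
  have : ⟪x + u, u⟫ = ⟪q + b, b⟫ := by
    rw [← hq, ← ContinuousLinearMap.adjoint_inner_right, ← hu]
  rw [inner_add_left, inner_add_left, real_inner_self_eq_norm_sq,
    real_inner_self_eq_norm_sq] at this
  linarith

lemma inner_nonneg_of_apply_add_adjoint (hL : ‖L‖ ≤ 1) (hu : u = (L†) b)
    (hq : L (x + u) = q + b) (hqb : 0 ≤ ⟪q, b⟫) : 0 ≤ ⟪x, u⟫ := by
  have hub : ‖u‖ ≤ ‖b‖ :=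
    hu ▸ (L†).norm_apply_le_of_opNorm_le_one (by rwa [LinearIsometryEquiv.norm_map]) b
  rw [inner_eq_of_apply_add_adjoint hu hq]
  nlinarith [norm_nonneg u]

lemma norm_sq_add_norm_sq_le_of_apply_add_adjoint (hL : ‖L‖ ≤ 1) (hu : u = (L†) b)
    (hq : L (x + u) = q + b) : ‖q‖ ^ 2 + ‖u‖ ^ 2 ≤ ‖x‖ ^ 2 + ‖b‖ ^ 2 := by
  have : ‖q + b‖ ^ 2 ≤ ‖x + u‖ ^ 2 :=
    pow_le_pow_left₀ (norm_nonneg _) (hq ▸ L.norm_apply_le_of_opNorm_le_one hL (x + u)) 2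
  rw [norm_add_sq_real, norm_add_sq_real, inner_eq_of_apply_add_adjoint hu hq] at this
  linarith

lemma norm_le_of_apply_add_adjoint (hL : ‖L‖ ≤ 1) (hu : u = (L†) b)
    (hq : L (x + u) = q + b) (hbq : ‖b‖ ≤ ‖q‖) : ‖u‖ ≤ ‖x‖ := by
  have := norm_sq_add_norm_sq_le_of_apply_add_adjoint hL hu hq
  have := pow_le_pow_left₀ (norm_nonneg b) hbq 2
  exact (sq_le_sq₀ (norm_nonneg u) (norm_nonneg x)).1 (by linarith)

end

theorem ccomp_monotone_nonexpansive_general (L : H →L[ℝ] G) (hL : ‖L‖ ≤ 1)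
    (D : Set G) (B : G → G)
    (hmon : ∀ y₁ ∈ D, ∀ y₂ ∈ D, 0 ≤ ⟪y₁ - y₂, B y₁ - B y₂⟫)
    (hne : ∀ y₁ ∈ D, ∀ y₂ ∈ D, ‖B y₁ - B y₂‖ ≤ ‖y₁ - y₂‖) :
    SVMonotone (ccomp L (fun y => {v | y ∈ D ∧ v = B y})) ∧
      ∀ x₁ u₁ x₂ u₂,
        u₁ ∈ ccomp L (fun y => {v | y ∈ D ∧ v = B y}) x₁ →
        u₂ ∈ ccomp L (fun y => {v | y ∈ D ∧ v = B y}) x₂ →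
        ‖u₁ - u₂‖ ≤ ‖x₁ - x₂‖ := by
  refine ⟨fun x₁ u₁ x₂ u₂ h₁ h₂ => ?_, fun x₁ u₁ x₂ u₂ h₁ h₂ => ?_⟩
  · obtain ⟨q₁, hq₁, q₂, hq₂, hu, hq⟩ := exists_sub_of_mem_ccomp_graph h₁ h₂
    exact inner_nonneg_of_apply_add_adjoint hL hu hq (hmon q₁ hq₁ q₂ hq₂)
  · obtain ⟨q₁, hq₁, q₂, hq₂, hu, hq⟩ := exists_sub_of_mem_ccomp_graph h₁ h₂
    exact norm_le_of_apply_add_adjoint hL hu hq (hne q₁ hq₁ q₂ hq₂)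

/-- If `‖L‖ ≤ 1` and `B : D → G` is monotone and nonexpansive, then `L ▶ B` is
monotone and nonexpansive. -/
theorem ccomp_monotone_nonexpansive (L : H →L[ℝ] G) (hL : ‖L‖ ≤ 1)
    (D : Set G) (hD : D.Nonempty) (B : G → G)
    (hmon : ∀ y₁ ∈ D, ∀ y₂ ∈ D, 0 ≤ ⟪y₁ - y₂, B y₁ - B y₂⟫)
    (hne : ∀ y₁ ∈ D, ∀ y₂ ∈ D, ‖B y₁ - B y₂‖ ≤ ‖y₁ - y₂‖) :
    SVMonotone (ccomp L (fun y => {v | y ∈ D ∧ v = B y})) ∧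
      ∀ x₁ u₁ x₂ u₂,
        u₁ ∈ ccomp L (fun y => {v | y ∈ D ∧ v = B y}) x₁ →
        u₂ ∈ ccomp L (fun y => {v | y ∈ D ∧ v = B y}) x₂ →
        ‖u₁ - u₂‖ ≤ ‖x₁ - x₂‖ :=
  ccomp_monotone_nonexpansive_general L hL D B hmon hne
end
end

section
/- If 0 < ‖L‖ ≤ 1 and g ∈ Γ₀(G), then the Moreau envelope of the proximal cocomposition satisfies (L ▶ g) □ Q_H = (g □ Q_G) ∘ L, and consequently L⁻¹(Argmin g) ⊆ Argmin(L ▶ g) = Argmin((g □ Q_G) ∘ L). -/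
open scoped RealInnerProductSpace

noncomputable section

/-- Fenchel conjugate with values in `EReal`. -/
def eConj {E : Type*} [NormedAddCommGroup E] [InnerProductSpace ℝ E] (f : E → EReal) :
    E → EReal :=
  fun u => ⨆ x, ((⟪x, u⟫ : ℝ) : EReal) - f x

/-- Infimal convolution. -/
def eInfConv {E : Type*} [AddGroup E] (f g : E → EReal) : E → EReal :=
  fun x => ⨅ z, f z + g (x - z)

/-- Canonical quadratic form `Q = ‖·‖²/2`. -/
def eQ {E : Type*} [Norm E] : E → EReal := fun x => ((‖x‖ ^ 2 / 2 : ℝ) : EReal)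

/-- Proximal composition `L ▷ g = ((g* □ Q_G) ∘ L)* - Q_H`. -/
def pcomp {H G : Type*} [NormedAddCommGroup H] [InnerProductSpace ℝ H] [CompleteSpace H]
    [NormedAddCommGroup G] [InnerProductSpace ℝ G] [CompleteSpace G]
    (L : H →L[ℝ] G) (g : G → EReal) : H → EReal :=
  fun x => eConj (fun h => eInfConv (eConj g) eQ (L h)) x - eQ x

/-- Proximal cocomposition `L ▶ g = (L ▷ g*)*`. -/
def pccomp {H G : Type*} [NormedAddCommGroup H] [InnerProductSpace ℝ H] [CompleteSpace H]
    [NormedAddCommGroup G] [InnerProductSpace ℝ G] [CompleteSpace G]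
    (L : H →L[ℝ] G) (g : G → EReal) : H → EReal :=
  eConj (pcomp L (eConj g))

/-- Properness of an `EReal`-valued function. -/
def EProper {E : Type*} (f : E → EReal) : Prop := (∀ x, f x ≠ ⊥) ∧ ∃ x, f x ≠ ⊤

/-- Convexity via the epigraph. -/
def EConvex {E : Type*} [AddCommGroup E] [Module ℝ E] (f : E → EReal) : Prop :=
  Convex ℝ {p : E × ℝ | f p.1 ≤ (p.2 : EReal)}

/-- Convex subdifferential. -/
def esubdiff {E : Type*} [NormedAddCommGroup E] [InnerProductSpace ℝ E] (f : E → EReal) :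
    E → Set E :=
  fun x => {u | ∀ z, f x + ((⟪z - x, u⟫ : ℝ) : EReal) ≤ f z}

/-- `p` is the proximal point of `f` at `x`. -/
def IsProxPt {E : Type*} [NormedAddCommGroup E] [InnerProductSpace ℝ E]
    (f : E → EReal) (x p : E) : Prop :=
  ∀ z, f p + ((‖x - p‖ ^ 2 / 2 : ℝ) : EReal) ≤ f z + ((‖x - z‖ ^ 2 / 2 : ℝ) : EReal)


/-!
Write `φ = (g □ Q) ∘ L`; as `g ∈ Γ₀(G)`, the Moreau envelope `g □ Q` is a real-valued continuous
convex function, so `φ ∈ Γ₀(H)`, and since `g** = g` we have `L ▶ g = (φ* - Q)*`. The identities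
`f □ Q = Q - (f + Q)*` and `(f □ Q)* = f* + Q`, valid for every `f`, give
`(φ* - Q) □ Q = Q - φ** = Q - φ =: κ`, hence `L ▶ g + Q = κ*` and `(L ▶ g) □ Q = Q - κ**`.
Because `‖L‖ ≤ 1`, `κ x = ⨆ z, (‖x‖²/2 - ‖L x - z‖²/2 - g z)` is a supremum of lower semicontinuous
convex functions, so `κ** = κ` by Fenchel–Moreau and `(L ▶ g) □ Q = Q - κ = φ`.
The minimisers of a lower semicontinuous function and of its (finite) Moreau envelope coincide,
which gives the statements about `Argmin`.
-/

open Set Filter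

namespace EReal

lemma coe_sub_coe_sub (a b : ℝ) (e : EReal) : (a : EReal) - (b - e) = e + (a - b : ℝ) := by
  induction e using EReal.rec <;> simp [← EReal.coe_sub, ← EReal.coe_add]
  ring

lemma coe_sub_add_coe (a b : ℝ) (e : EReal) : (a : EReal) - (e + b) = (a - b : ℝ) - e := by
  induction e using EReal.rec <;> simp [← EReal.coe_sub, ← EReal.coe_add]
  ring

lemma coe_add_sub (a b : ℝ) (e : EReal) : ((a + b : ℝ) : EReal) - e = (a - e) + b := by
  induction e using EReal.rec <;> simp [← EReal.coe_sub, ← EReal.coe_add]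
  ring

lemma continuous_coe_sub (e : EReal) : Continuous fun r : ℝ => (r : EReal) - e := by
  induction e using EReal.rec with
  | bot => simpa using continuous_const
  | top => simpa using continuous_const
  | coe s =>
    simp_rw [← EReal.coe_sub]
    exact continuous_coe_real_ereal.comp (continuous_id.sub continuous_const)

lemma continuous_const_sub (r : ℝ) : Continuous fun e : EReal => (r : EReal) - e := by
  simp_rw [sub_eq_add_neg]
  refine continuous_iff_continuousAt.2 fun e => ?_
  exact (EReal.continuousAt_add (p := ((r : EReal), -e)) (.inl (coe_ne_top r))
    (.inl (coe_ne_bot r))).comp (f := fun e : EReal => ((r : EReal), -e))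
    (continuous_const.prodMk continuous_neg).continuousAt

lemma coe_sub_iSup {ι : Sort*} (r : ℝ) (f : ι → EReal) :
    (r : EReal) - ⨆ i, f i = ⨅ i, (r : EReal) - f i :=
  Antitone.map_iSup_of_continuousAt (continuous_const_sub r).continuousAt
    (fun _ _ h => EReal.sub_le_sub le_rfl h) (coe_sub_bot r)

lemma coe_sub_iInf {ι : Sort*} (r : ℝ) (f : ι → EReal) :
    (r : EReal) - ⨅ i, f i = ⨆ i, (r : EReal) - f i :=
  Antitone.map_iInf_of_continuousAt (continuous_const_sub r).continuousAt
    (fun _ _ h => EReal.sub_le_sub le_rfl h) (sub_top r)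

lemma iSup_add_coe {ι : Sort*} (f : ι → EReal) (r : ℝ) : (⨆ i, f i) + r = ⨆ i, f i + r :=
  Monotone.map_iSup_of_continuousAt (f := fun e : EReal => e + r)
    ((EReal.continuousAt_add (.inr (coe_ne_bot r)) (.inr (coe_ne_top r))).comp
      (continuous_id.prodMk continuous_const).continuousAt)
    (fun _ _ h => add_le_add_left h _) (bot_add _)

end EReal

section Normed

variable {E : Type*} [NormedAddCommGroup E]

lemma eQ_nonneg (x : E) : 0 ≤ eQ x :=
  EReal.coe_nonneg.2 (by positivity)

lemma eInfConv_eQ_le (f : E → EReal) (x z : E) : eInfConv f eQ x ≤ f z + eQ (x - z) :=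
  iInf_le (fun z => f z + eQ (x - z)) z

lemma eInfConv_eQ_le_self (f : E → EReal) (x : E) : eInfConv f eQ x ≤ f x := by
  simpa [eQ] using eInfConv_eQ_le f x x

lemma exists_lt_of_eInfConv_eQ_lt {f : E → EReal} {x : E} {r : ℝ} (h : eInfConv f eQ x < r) :
    ∃ z, f z < ((r - ‖x - z‖ ^ 2 / 2 : ℝ) : EReal) := by
  obtain ⟨z, hz⟩ := iInf_lt_iff.1 h
  refine ⟨z, ?_⟩
  rwa [EReal.coe_sub, EReal.lt_sub_iff_add_lt (.inl (EReal.coe_ne_bot _))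
    (.inl (EReal.coe_ne_top _))]

lemma eInfConv_eQ_le_of_forall_le {f : E → EReal} {x : E} (hx : ∀ w, f x ≤ f w) (z : E) :
    eInfConv f eQ x ≤ eInfConv f eQ z :=
  (eInfConv_eQ_le_self f x).trans
    (le_iInf fun w => (hx w).trans (le_add_of_nonneg_right (eQ_nonneg _)))

lemma le_of_forall_eInfConv_eQ_le {f : E → EReal} (hf : LowerSemicontinuous f) {x : E}
    (hbot : eInfConv f eQ x ≠ ⊥) (hx : ∀ w, eInfConv f eQ x ≤ eInfConv f eQ w) (z : E) :
    f x ≤ f z := by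
  have hlow : ∀ w, eInfConv f eQ x ≤ f w := fun w => (hx w).trans (eInfConv_eQ_le_self f w)
  refine le_trans ?_ (hlow z)
  -- Since `f ≥ eInfConv f eQ x` everywhere, a near-minimiser `w` of `f + eQ (x - ·)` is close
  -- to `x`, and lower semicontinuity at `x` then bounds `f x`.
  refine EReal.le_of_forall_lt_iff_le.1 fun c hc => ?_
  by_contra! hfc
  obtain ⟨ε, hε, hball⟩ := Metric.eventually_nhds_iff.1 (hf x c hfc)
  obtain ⟨μ, hμ⟩ : ∃ μ : ℝ, eInfConv f eQ x = μ := ⟨_, (EReal.coe_toReal hc.ne_top hbot).symm⟩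
  rw [hμ, EReal.coe_lt_coe_iff] at hc
  obtain ⟨w, hw⟩ := exists_lt_of_eInfConv_eQ_lt (f := f) (x := x) (r := min c (μ + ε ^ 2 / 2))
    (hμ ▸ EReal.coe_lt_coe_iff.2 (lt_min hc (by linarith [pow_pos hε 2])))
  have hμw : μ < min c (μ + ε ^ 2 / 2) - ‖x - w‖ ^ 2 / 2 :=
    EReal.coe_lt_coe_iff.1 ((hμ ▸ hlow w).trans_lt hw)
  have hdist : dist w x < ε := by
    rw [dist_comm, dist_eq_norm]
    nlinarith [min_le_right c (μ + ε ^ 2 / 2), norm_nonneg (x - w)]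
  have hcw : c < min c (μ + ε ^ 2 / 2) - ‖x - w‖ ^ 2 / 2 :=
    EReal.coe_lt_coe_iff.1 ((hball hdist).trans hw)
  linarith [min_le_left c (μ + ε ^ 2 / 2), sq_nonneg ‖x - w‖]

lemma coe_sub_eInfConv_eQ (f : E → EReal) (r : ℝ) (y : E) :
    (r : EReal) - eInfConv f eQ y = ⨆ z, ((r - ‖y - z‖ ^ 2 / 2 : ℝ) : EReal) - f z := by
  rw [eInfConv, EReal.coe_sub_iInf]
  exact iSup_congr fun z => EReal.coe_sub_add_coe _ _ _

end Normed

section InnerProductSpace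

variable {E : Type*} [NormedAddCommGroup E] [InnerProductSpace ℝ E]

lemma real_inner_le_half_sq_norm_add (x y : E) : ⟪x, y⟫ ≤ ‖x‖ ^ 2 / 2 + ‖y‖ ^ 2 / 2 := by
  nlinarith [norm_sub_sq_real x y, sq_nonneg ‖x - y‖]

lemma norm_smul_add_smul_sq {a b : ℝ} (hab : a + b = 1) (x y : E) :
    ‖a • x + b • y‖ ^ 2 = a * ‖x‖ ^ 2 + b * ‖y‖ ^ 2 - a * b * ‖x - y‖ ^ 2 := by
  obtain rfl : b = 1 - a := by linarith
  simp only [← real_inner_self_eq_norm_sq, inner_add_left, inner_add_right, inner_sub_left,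
    inner_sub_right, real_inner_smul_left, real_inner_smul_right, real_inner_comm y x]
  ring

lemma le_eConj (f : E → EReal) (u x : E) : ((⟪x, u⟫ : ℝ) : EReal) - f x ≤ eConj f u :=
  le_iSup (fun x => ((⟪x, u⟫ : ℝ) : EReal) - f x) x

lemma eConj_le_iff {f : E → EReal} {u : E} {c : EReal} :
    eConj f u ≤ c ↔ ∀ x, ((⟪x, u⟫ : ℝ) : EReal) - f x ≤ c :=
  iSup_le_iff

lemma lowerSemicontinuous_eConj (f : E → EReal) : LowerSemicontinuous (eConj f) :=
  lowerSemicontinuous_iSup fun x =>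
    ((EReal.continuous_coe_sub (f x)).comp
      (continuous_const.inner continuous_id)).lowerSemicontinuous

lemma eConj_eConj_le (f : E → EReal) (x : E) : eConj (eConj f) x ≤ f x :=
  eConj_le_iff.2 fun u =>
    calc ((⟪u, x⟫ : ℝ) : EReal) - eConj f u ≤ (⟪u, x⟫ : ℝ) - ((⟪x, u⟫ : ℝ) - f x) :=
          EReal.sub_le_sub le_rfl (le_eConj f u x)
      _ = f x := by rw [EReal.coe_sub_coe_sub, real_inner_comm, sub_self, EReal.coe_zero, add_zero]

lemma coe_le_eConj_eConj_of_affine_minorant {f : E → EReal} {u : E} {β : ℝ}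
    (h : ∀ z, ((⟪z, u⟫ + β : ℝ) : EReal) ≤ f z) (x : E) :
    ((⟪x, u⟫ + β : ℝ) : EReal) ≤ eConj (eConj f) x := by
  have hu : eConj f u ≤ ((-β : ℝ) : EReal) := eConj_le_iff.2 fun z =>
    calc ((⟪z, u⟫ : ℝ) : EReal) - f z ≤ (⟪z, u⟫ : ℝ) - ((⟪z, u⟫ + β : ℝ) : EReal) :=
          EReal.sub_le_sub le_rfl (h z)
      _ = ((-β : ℝ) : EReal) := by rw [← EReal.coe_sub]; ring_nf
  calc ((⟪x, u⟫ + β : ℝ) : EReal) = (⟪u, x⟫ : ℝ) - ((-β : ℝ) : EReal) := by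
        rw [← EReal.coe_sub, real_inner_comm]; ring_nf
    _ ≤ (⟪u, x⟫ : ℝ) - eConj f u := EReal.sub_le_sub le_rfl hu
    _ ≤ eConj (eConj f) x := le_eConj _ _ _

lemma eConvex_coe_iff {φ : E → ℝ} : EConvex (fun x => (φ x : EReal)) ↔ ConvexOn ℝ univ φ := by
  simp [EConvex, convexOn_iff_convex_epigraph]

lemma EConvex.coe_sub {c : E → ℝ} (hc : ConvexOn ℝ univ c) (e : EReal) :
    EConvex fun x => (c x : EReal) - e := by
  induction e using EReal.rec with
  | bot => simpa [EConvex] using convex_empty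
  | top => simpa [EConvex] using convex_univ
  | coe s =>
    simp_rw [← EReal.coe_sub]
    exact eConvex_coe_iff.2 (hc.sub (concaveOn_const s convex_univ))

lemma EConvex.iSup {ι : Sort*} {f : ι → E → EReal} (h : ∀ i, EConvex (f i)) :
    EConvex fun x => ⨆ i, f i x := by
  simpa [EConvex, Set.ofPred_forall] using convex_iInter h

lemma eInfConv_eQ_eq_eQ_sub_eConj (f : E → EReal) (x : E) :
    eInfConv f eQ x = eQ x - eConj (fun z => f z + eQ z) x := by
  rw [eInfConv, eConj, eQ, EReal.coe_sub_iSup]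
  refine iInf_congr fun z => ?_
  rw [EReal.coe_sub_coe_sub, eQ, eQ, add_assoc, ← EReal.coe_add, norm_sub_sq_real,
    real_inner_comm]
  ring_nf

lemma eInfConv_sub_eQ_eQ (ψ : E → EReal) (x : E) :
    eInfConv (fun z => ψ z - eQ z) eQ x = eQ x - eConj ψ x := by
  simp only [eInfConv_eQ_eq_eQ_sub_eConj, eQ, EReal.sub_add_cancel]

lemma eConj_eInfConv_eQ (f : E → EReal) (w : E) :
    eConj (eInfConv f eQ) w = eConj f w + eQ w := by
  refine le_antisymm (eConj_le_iff.2 fun x => ?_) ?_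
  · rw [eInfConv, EReal.coe_sub_iInf]
    refine iSup_le fun z => ?_
    have hyoung : ⟪x, w⟫ - ‖x - z‖ ^ 2 / 2 ≤ ⟪z, w⟫ + ‖w‖ ^ 2 / 2 := by
      linarith [real_inner_le_half_sq_norm_add (x - z) w, inner_sub_left (𝕜 := ℝ) x z w]
    calc ((⟪x, w⟫ : ℝ) : EReal) - (f z + eQ (x - z))
        = ((⟪x, w⟫ - ‖x - z‖ ^ 2 / 2 : ℝ) : EReal) - f z := EReal.coe_sub_add_coe _ _ _
      _ ≤ ((⟪z, w⟫ + ‖w‖ ^ 2 / 2 : ℝ) : EReal) - f z :=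
          EReal.sub_le_sub (EReal.coe_le_coe_iff.2 hyoung) le_rfl
      _ = ((⟪z, w⟫ : ℝ) : EReal) - f z + eQ w := EReal.coe_add_sub _ _ _
      _ ≤ eConj f w + eQ w := add_le_add_left (le_eConj f w z) _
  · rw [eConj, eQ, EReal.iSup_add_coe]
    refine iSup_le fun z => ?_
    calc ((⟪z, w⟫ : ℝ) : EReal) - f z + ((‖w‖ ^ 2 / 2 : ℝ) : EReal)
        = ((⟪z + w, w⟫ - ‖w‖ ^ 2 / 2 : ℝ) : EReal) - f z := by
          rw [← EReal.coe_add_sub, inner_add_left, real_inner_self_eq_norm_sq]; ring_nf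
      _ = ((⟪z + w, w⟫ : ℝ) : EReal) - (f z + eQ (z + w - z)) := by
          rw [add_sub_cancel_left, eQ, EReal.coe_sub_add_coe]
      _ ≤ ((⟪z + w, w⟫ : ℝ) : EReal) - eInfConv f eQ (z + w) :=
          EReal.sub_le_sub le_rfl (eInfConv_eQ_le f _ z)
      _ ≤ eConj (eInfConv f eQ) w := le_eConj _ _ _

lemma EConvex.eInfConv_eQ {f : E → EReal} (hf : EConvex f) : EConvex (eInfConv f eQ) := by
  rintro ⟨x, s⟩ (hxs : eInfConv f eQ x ≤ s) ⟨y, t⟩ (hyt : eInfConv f eQ y ≤ t) a b ha hb hab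
  show eInfConv f eQ (a • x + b • y) ≤ ((a * s + b * t : ℝ) : EReal)
  refine EReal.le_of_forall_lt_iff_le.1 fun r hr => ?_
  have hε : 0 < r - (a * s + b * t) := sub_pos.2 (EReal.coe_lt_coe_iff.1 hr)
  obtain ⟨z₁, hz₁⟩ := exists_lt_of_eInfConv_eQ_lt (r := s + (r - (a * s + b * t)))
    (hxs.trans_lt (EReal.coe_lt_coe_iff.2 (by linarith)))
  obtain ⟨z₂, hz₂⟩ := exists_lt_of_eInfConv_eQ_lt (r := t + (r - (a * s + b * t)))
    (hyt.trans_lt (EReal.coe_lt_coe_iff.2 (by linarith)))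
  have hcomb := hf (show (z₁, _) ∈ _ from hz₁.le) (show (z₂, _) ∈ _ from hz₂.le) ha hb hab
  simp only [Prod.smul_mk, Prod.mk_add_mk, smul_eq_mul] at hcomb
  have hsq := norm_smul_add_smul_sq hab (x - z₁) (y - z₂)
  have hvec : a • x + b • y - (a • z₁ + b • z₂) = a • (x - z₁) + b • (y - z₂) := by
    simp only [smul_sub]; abel
  calc eInfConv f eQ (a • x + b • y)
      ≤ f (a • z₁ + b • z₂) + eQ (a • (x - z₁) + b • (y - z₂)) := hvec ▸ eInfConv_eQ_le f _ _
    _ ≤ _ + _ := add_le_add_left hcomb _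
    _ ≤ r := by
        rw [eQ, ← EReal.coe_add, EReal.coe_le_coe_iff]
        nlinarith [mul_nonneg (mul_nonneg ha hb) (sq_nonneg ‖x - z₁ - (y - z₂)‖)]

lemma exists_affine_minorant_of_separation {f : E → EReal} {u x : E} {a c t : ℝ} (ha : a < 0)
    (hsep : ∀ z (s : ℝ), f z ≤ s → ⟪z, u⟫ + a * s < c) (hx : c < ⟪x, u⟫ + a * t) :
    ∃ (v : E) (β : ℝ), (∀ z, ((⟪z, v⟫ + β : ℝ) : EReal) ≤ f z) ∧ t < ⟪x, v⟫ + β := by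
  have hv : ∀ y, ⟪y, (-a)⁻¹ • u⟫ + c / a = (⟪y, u⟫ - c) / (-a) := fun y => by
    rw [real_inner_smul_right]; field_simp; ring
  refine ⟨(-a)⁻¹ • u, c / a, fun z => ?_, ?_⟩
  · by_contra! hz
    have := hsep z _ hz.le
    rw [hv] at this
    have hcancel : a * ((⟪z, u⟫ - c) / -a) = c - ⟪z, u⟫ := by field_simp [ha.ne]; ring
    linarith
  · rw [hv, lt_div_iff₀ (neg_pos.2 ha)]
    linarith

end InnerProductSpace

lemma ConvexOn.continuous_of_le {E : Type*} [NormedAddCommGroup E] [NormedSpace ℝ E]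
    {f b : E → ℝ} (hf : ConvexOn ℝ univ f) (hb : Continuous b) (hfb : ∀ x, f x ≤ b x) :
    Continuous f := by
  rw [← continuousOn_univ]
  refine ((hf.continuousOn_tfae isOpen_univ univ_nonempty).out 4 1).1 fun x₀ _ =>
    isBoundedUnder_of_eventually_le (a := b x₀ + 1) ?_
  filter_upwards [hb.continuousAt.eventually_lt continuousAt_const (lt_add_one (b x₀))] with y hy
  exact (hfb y).trans hy.le

lemma EProper.exists_eq_coe {E : Type*} {f : E → EReal} (hp : EProper f) :
    ∃ (x₀ : E) (r₀ : ℝ), f x₀ = r₀ := by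
  obtain ⟨x₀, hx₀⟩ := hp.2
  exact ⟨x₀, _, (EReal.coe_toReal hx₀ (hp.1 x₀)).symm⟩

section CompleteSpace

variable {E : Type*} [NormedAddCommGroup E] [InnerProductSpace ℝ E] [CompleteSpace E]
  {f : E → EReal}

lemma EConvex.exists_separation (hcvx : EConvex f) (hlsc : LowerSemicontinuous f)
    {x : E} {t : ℝ} (ht : (t : EReal) < f x) :
    ∃ (u : E) (a c : ℝ), (∀ z (s : ℝ), f z ≤ s → ⟪z, u⟫ + a * s < c) ∧ c < ⟪x, u⟫ + a * t := by
  have hclosed : IsClosed {p : E × ℝ | f p.1 ≤ p.2} :=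
    hlsc.isClosed_epigraph.preimage
      (continuous_fst.prodMk (continuous_coe_real_ereal.comp continuous_snd))
  obtain ⟨ℓ, c, hℓ, hx⟩ := geometric_hahn_banach_closed_point hcvx hclosed
    (show (x, t) ∉ {p : E × ℝ | f p.1 ≤ p.2} from not_le.2 ht)
  set u := (InnerProductSpace.toDual ℝ E).symm (ℓ.comp (.inl ℝ E ℝ))
  have hℓu : ∀ z (s : ℝ), ℓ (z, s) = ⟪z, u⟫ + ℓ (0, 1) * s := fun z s => by
    have hzs : ((z, s) : E × ℝ) = (z, 0) + s • (0, 1) := by simp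
    rw [hzs, map_add, map_smul, smul_eq_mul, real_inner_comm, InnerProductSpace.toDual_symm_apply]
    simp [mul_comm]
  exact ⟨u, ℓ (0, 1), c, fun z s hzs => hℓu z s ▸ hℓ (z, s) hzs, hℓu x t ▸ hx⟩


lemma exists_affine_minorant (hp : EProper f) (hlsc : LowerSemicontinuous f) (hcvx : EConvex f) :
    ∃ (u : E) (β : ℝ), ∀ z, ((⟪z, u⟫ + β : ℝ) : EReal) ≤ f z := by
  obtain ⟨x₀, r₀, hr₀⟩ := hp.exists_eq_coe
  obtain ⟨u, a, c, hsep, hx₀⟩ :=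
    hcvx.exists_separation hlsc (hr₀ ▸ EReal.coe_lt_coe_iff.2 (sub_one_lt r₀))
  have ha : a < 0 := by nlinarith [hsep x₀ r₀ hr₀.le]
  obtain ⟨v, β, hvβ, -⟩ := exists_affine_minorant_of_separation ha hsep hx₀
  exact ⟨v, β, hvβ⟩

lemma exists_affine_minorant_ge (hp : EProper f) (hlsc : LowerSemicontinuous f)
    (hcvx : EConvex f) {x : E} {t : ℝ} (ht : (t : EReal) < f x) :
    ∃ (u : E) (β : ℝ), (∀ z, ((⟪z, u⟫ + β : ℝ) : EReal) ≤ f z) ∧ t ≤ ⟪x, u⟫ + β := by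
  obtain ⟨u, a, c, hsep, hx⟩ := hcvx.exists_separation hlsc ht
  obtain ⟨x₀, r₀, hr₀⟩ := hp.exists_eq_coe
  have ha : a ≤ 0 := by
    by_contra! ha
    have hs : r₀ ≤ max r₀ ((c - ⟪x₀, u⟫) / a) := le_max_left _ _
    have := hsep x₀ _ (hr₀.trans_le (EReal.coe_le_coe_iff.2 hs))
    have := mul_le_mul_of_nonneg_left (le_max_right r₀ ((c - ⟪x₀, u⟫) / a)) ha.le
    rw [mul_div_cancel₀ _ ha.ne'] at this
    linarith
  obtain ha | rfl := ha.lt_or_eq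
  · obtain ⟨v, β, hvβ, hxv⟩ := exists_affine_minorant_of_separation ha hsep hx
    exact ⟨v, β, hvβ, hxv.le⟩
  -- A vertical separating hyperplane: tilt an affine minorant along it until it passes above `t`.
  obtain ⟨u₀, β₀, h₀⟩ := exists_affine_minorant hp hlsc hcvx
  simp only [zero_mul, add_zero] at hsep hx
  set k := |t - (⟪x, u₀⟫ + β₀)| / (⟪x, u⟫ - c)
  have hk : 0 ≤ k := div_nonneg (abs_nonneg _) (sub_pos.2 hx).le
  have hkx : k * (⟪x, u⟫ - c) = |t - (⟪x, u₀⟫ + β₀)| := div_mul_cancel₀ _ (sub_pos.2 hx).ne'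
  have htilt : ∀ y, ⟪y, u₀ + k • u⟫ + (β₀ - k * c) = ⟪y, u₀⟫ + β₀ + k * (⟪y, u⟫ - c) :=
    fun y => by rw [inner_add_right, real_inner_smul_right]; ring
  refine ⟨u₀ + k • u, β₀ - k * c, fun z => ?_, ?_⟩
  · by_contra! hz
    have hlt := EReal.coe_lt_coe_iff.1 ((h₀ z).trans_lt hz)
    rw [htilt] at hlt
    nlinarith [mul_nonpos_of_nonneg_of_nonpos hk (sub_neg.2 (hsep z _ hz.le)).le]
  · rw [htilt, hkx]
    linarith [le_abs_self (t - (⟪x, u₀⟫ + β₀))]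

theorem eConj_eConj_eq (hp : EProper f) (hlsc : LowerSemicontinuous f) (hcvx : EConvex f) :
    eConj (eConj f) = f := by
  funext x
  refine le_antisymm (eConj_eConj_le f x) (not_lt.1 fun hlt => ?_)
  obtain ⟨t, ht₁, ht₂⟩ := EReal.exists_between_coe_real hlt
  obtain ⟨u, β, hminor, hxt⟩ := exists_affine_minorant_ge hp hlsc hcvx ht₂
  exact (ht₁.trans_le ((EReal.coe_le_coe_iff.2 hxt).trans
    (coe_le_eConj_eConj_of_affine_minorant hminor x))).false

theorem exists_continuous_convexOn_eq_eInfConv_eQ (hp : EProper f)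
    (hlsc : LowerSemicontinuous f) (hcvx : EConvex f) :
    ∃ m : E → ℝ, Continuous m ∧ ConvexOn ℝ univ m ∧ ∀ x, eInfConv f eQ x = m x := by
  obtain ⟨u, β, hminor⟩ := exists_affine_minorant hp hlsc hcvx
  obtain ⟨x₀, r₀, hr₀⟩ := hp.exists_eq_coe
  have hupper : ∀ x, eInfConv f eQ x ≤ ((r₀ + ‖x - x₀‖ ^ 2 / 2 : ℝ) : EReal) := fun x => by
    simpa [hr₀, eQ] using eInfConv_eQ_le f x x₀
  have hlower : ∀ x, ((⟪x, u⟫ + β - ‖u‖ ^ 2 / 2 : ℝ) : EReal) ≤ eInfConv f eQ x := fun x =>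
    le_iInf fun z => by
      refine le_trans ?_ (add_le_add_left (hminor z) _)
      rw [eQ, ← EReal.coe_add, EReal.coe_le_coe_iff]
      linarith [real_inner_le_half_sq_norm_add (x - z) u, inner_sub_left (𝕜 := ℝ) x z u]
  set m : E → ℝ := fun x => (eInfConv f eQ x).toReal
  have hm : ∀ x, eInfConv f eQ x = m x := fun x =>
    (EReal.coe_toReal (ne_top_of_le_ne_top (EReal.coe_ne_top _) (hupper x))
      (ne_bot_of_le_ne_bot (EReal.coe_ne_bot _) (hlower x))).symm
  have hconv : ConvexOn ℝ univ m := by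
    rw [← eConvex_coe_iff, ← funext hm]
    exact hcvx.eInfConv_eQ
  refine ⟨m, hconv.continuous_of_le (b := fun x => r₀ + ‖x - x₀‖ ^ 2 / 2) (by fun_prop)
    fun x => EReal.coe_le_coe_iff.1 (hm x ▸ hupper x), hconv, hm⟩

end CompleteSpace

section ProximalCocomposition

variable {H G : Type*} [NormedAddCommGroup H] [InnerProductSpace ℝ H]
  [NormedAddCommGroup G] [InnerProductSpace ℝ G]

lemma convexOn_half_sq_norm_sub_half_sq_norm_map_sub (L : H →L[ℝ] G) (hL : ‖L‖ ≤ 1) (z : G) :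
    ConvexOn ℝ univ fun x => ‖x‖ ^ 2 / 2 - ‖L x - z‖ ^ 2 / 2 := by
  refine ⟨convex_univ, fun x _ y _ a b ha hb hab => ?_⟩
  have hvec : L (a • x + b • y) - z = a • (L x - z) + b • (L y - z) := by
    rw [map_add, map_smul, map_smul, smul_sub, smul_sub, sub_add_sub_comm, ← add_smul, hab,
      one_smul]
  have hLxy : ‖L x - z - (L y - z)‖ ^ 2 ≤ ‖x - y‖ ^ 2 := by
    rw [sub_sub_sub_cancel_right, ← map_sub]
    exact pow_le_pow_left₀ (norm_nonneg _) ((L.le_of_opNorm_le hL _).trans_eq (one_mul _)) 2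
  simp only [smul_eq_mul]
  rw [hvec, norm_smul_add_smul_sq hab, norm_smul_add_smul_sq hab]
  nlinarith [mul_le_mul_of_nonneg_left hLxy (mul_nonneg ha hb)]

theorem eInfConv_pccomp_eQ [CompleteSpace H] [CompleteSpace G] (L : H →L[ℝ] G) (hL : ‖L‖ ≤ 1)
    {g : G → EReal} (hp : EProper g) (hlsc : LowerSemicontinuous g) (hcvx : EConvex g) (x : H) :
    eInfConv (pccomp L g) eQ x = eInfConv g eQ (L x) := by
  obtain ⟨m, hm_cont, hm_cvx, hm⟩ := exists_continuous_convexOn_eq_eInfConv_eQ hp hlsc hcvx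
  set φ : H → EReal := fun x => eInfConv g eQ (L x)
  set κ : H → EReal := fun x => eQ x - φ x
  have hφ : eConj (eConj φ) = φ := by
    have hφm : φ = fun x => ((m (L x) : ℝ) : EReal) := funext fun x => hm (L x)
    rw [hφm]
    refine eConj_eConj_eq ⟨fun _ => EReal.coe_ne_bot _, 0, EReal.coe_ne_top _⟩
      (continuous_coe_real_ereal.comp (hm_cont.comp L.continuous)).lowerSemicontinuous
      (eConvex_coe_iff.2 ?_)
    have hmL := hm_cvx.comp_linearMap (L : H →ₗ[ℝ] G)
    rwa [Set.preimage_univ] at hmL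
  have hκ : eConj (eConj κ) = κ := by
    have hκm : ∀ x, κ x = ((‖x‖ ^ 2 / 2 - m (L x) : ℝ) : EReal) := fun x => by
      simp only [κ, φ, eQ, hm, EReal.coe_sub]
    have hκsup : κ = fun x => ⨆ z, ((‖x‖ ^ 2 / 2 - ‖L x - z‖ ^ 2 / 2 : ℝ) : EReal) - g z :=
      funext fun x => coe_sub_eInfConv_eQ g _ _
    refine eConj_eConj_eq ⟨fun x => hκm x ▸ EReal.coe_ne_bot _, 0, hκm 0 ▸ EReal.coe_ne_top _⟩
      ?_ ?_ <;> rw [hκsup]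
    · exact lowerSemicontinuous_iSup fun z =>
        ((EReal.continuous_coe_sub (g z)).comp (by fun_prop)).lowerSemicontinuous
    · exact EConvex.iSup fun z =>
        EConvex.coe_sub (convexOn_half_sq_norm_sub_half_sq_norm_map_sub L hL z) (g z)
  have hconj : (fun w => pccomp L g w + eQ w) = eConj κ := by
    have hκinf : eInfConv (fun u => eConj φ u - eQ u) eQ = κ :=
      funext fun y => by rw [eInfConv_sub_eQ_eQ, hφ]
    funext w
    rw [← hκinf, eConj_eInfConv_eQ]
    unfold pccomp pcomp
    rw [eConj_eConj_eq hp hlsc hcvx]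
  rw [eInfConv_eQ_eq_eQ_sub_eConj, hconj, hκ]
  simp only [κ, φ, eQ, EReal.coe_sub_coe_sub, sub_self, EReal.coe_zero, add_zero]

end ProximalCocomposition

variable {H G : Type*}
  [NormedAddCommGroup H] [InnerProductSpace ℝ H] [CompleteSpace H]
  [NormedAddCommGroup G] [InnerProductSpace ℝ G] [CompleteSpace G]

theorem pccomp_envelope_general (L : H →L[ℝ] G) (hL1 : ‖L‖ ≤ 1)
    (g : G → EReal) (hp : EProper g) (hlsc : LowerSemicontinuous g)
    (hcvx : EConvex g) :
    (∀ x, eInfConv (pccomp L g) eQ x = eInfConv g eQ (L x)) ∧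
    L ⁻¹' {y : G | ∀ z, g y ≤ g z} ⊆ {x : H | ∀ z, pccomp L g x ≤ pccomp L g z} ∧
    {x : H | ∀ z, pccomp L g x ≤ pccomp L g z} =
      {x : H | ∀ z, eInfConv g eQ (L x) ≤ eInfConv g eQ (L z)} := by
  have henv := eInfConv_pccomp_eQ L hL1 hp hlsc hcvx
  obtain ⟨m, -, -, hm⟩ := exists_continuous_convexOn_eq_eInfConv_eQ hp hlsc hcvx
  have hargmin : {x : H | ∀ z, pccomp L g x ≤ pccomp L g z} =
      {x : H | ∀ z, eInfConv g eQ (L x) ≤ eInfConv g eQ (L z)} := by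
    ext x
    simp only [Set.mem_ofPred_eq, ← henv]
    exact ⟨eInfConv_eQ_le_of_forall_le, le_of_forall_eInfConv_eQ_le (lowerSemicontinuous_eConj _)
      (henv x ▸ hm (L x) ▸ EReal.coe_ne_bot _)⟩
  refine ⟨henv, fun x hx => hargmin ▸ fun z => eInfConv_eQ_le_of_forall_le hx (L z), hargmin⟩

/-- For `0 < ‖L‖ ≤ 1` and `g ∈ Γ₀(G)`: `(L ▶ g) □ Q_H = (g □ Q_G) ∘ L`, and
`L⁻¹(Argmin g) ⊆ Argmin (L ▶ g) = Argmin ((g □ Q_G) ∘ L)`. -/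
theorem pccomp_envelope (L : H →L[ℝ] G) (hL0 : 0 < ‖L‖) (hL1 : ‖L‖ ≤ 1)
    (g : G → EReal) (hp : EProper g) (hlsc : LowerSemicontinuous g)
    (hcvx : EConvex g) :
    (∀ x, eInfConv (pccomp L g) eQ x = eInfConv g eQ (L x)) ∧
    L ⁻¹' {y : G | ∀ z, g y ≤ g z} ⊆ {x : H | ∀ z, pccomp L g x ≤ pccomp L g z} ∧
    {x : H | ∀ z, pccomp L g x ≤ pccomp L g z} =
      {x : H | ∀ z, eInfConv g eQ (L x) ≤ eInfConv g eQ (L z)} :=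
  pccomp_envelope_general L hL1 g hp hlsc hcvx
end
end
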